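/- There exist a constant K̃₃ ∈ (0,1/2) and a positive constant C_{K̃₃,λ} such that for all x,y ∈ ℝ₊ with 0 < y/x − 1 < K̃₃, one has R_{Δ_λ}(x,y) ≥ C_{K̃₃,λ} · (1/(x^λ y^λ)) · (1/(y−x)). -/

import Mathlib

open MeasureTheory Real Set Filter

/-- The Riesz kernel `R_{Δ_λ}(x,y)`. -/
noncomputable def rieszKernel (lam x y : ℝ) : ℝ :=
  -(2 * lam / π) * ∫ θ in (0:ℝ)..π,
    ((x - y * Real.cos θ) * Real.sin θ ^ (2*lam - 1)) /
      ((x^2 + y^2 - 2*x*y*Real.cos θ) ^ (lam + 1))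

/-!
Write `a = y - x`, `w = xy` and `D(θ) = x² + y² - 2xy cos θ = a² + 2w(1 - cos θ)`. Since
`-(x - y cos θ) = a - y(1 - cos θ)`, the kernel is `(2λ/π)(a I₁ - y I₂)` with
`I₁ = ∫ sin^{2λ-1} θ / D^{λ+1}` and `I₂ = ∫ (1 - cos θ) sin^{2λ-1} θ / D^{λ+1}`.

On `0 < θ ≤ a/√w` one has `D ≤ 2a²`, which gives `a I₁ ≳ 1/(w^λ a)`. For `I₂`, splitting
`D^{λ+1} ≥ (a²)^β (2w(1 - cos θ))^{λ+1-β}` with `0 < β ≤ λ`, `β < 1/2` leaves the integrable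
weight `sin^{2β-1} θ`, so `y I₂ ≲ (y/x)^β (a/x)^{1-2β} / (w^λ a)`, which is negligible against
`a I₁` once `a/x` is small.
-/

lemma intervalIntegrable_sin_rpow_zero_pi_div_two {q : ℝ} (hq : -1 < q) :
    IntervalIntegrable (fun θ => sin θ ^ q) volume 0 (π / 2) := by
  rcases le_or_gt 0 q with hq0 | hq0
  · exact (continuous_sin.rpow_const fun _ => .inr hq0).intervalIntegrable 0 _
  refine ((intervalIntegral.intervalIntegrable_rpow' hq).const_mul ((2 / π) ^ q)).mono_fun
    (measurable_sin.pow_const q).aestronglyMeasurable ?_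
  rw [EventuallyLE, ae_restrict_iff' measurableSet_uIoc]
  refine .of_forall fun θ hθ => ?_
  rw [uIoc_of_le (by positivity)] at hθ
  have hθ0 : 0 < 2 / π * θ := mul_pos (by positivity) hθ.1
  have hsin : 0 ≤ sin θ := sin_nonneg_of_nonneg_of_le_pi hθ.1.le (by linarith [hθ.2, pi_pos])
  rw [norm_of_nonneg (rpow_nonneg hsin q), norm_of_nonneg (by have := hθ.1; positivity),
    ← mul_rpow (by positivity) hθ.1.le]
  exact rpow_le_rpow_of_nonpos hθ0 (mul_le_sin hθ.1.le hθ.2) hq0.le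

lemma intervalIntegrable_sin_rpow {q : ℝ} (hq : -1 < q) :
    IntervalIntegrable (fun θ => sin θ ^ q) volume 0 π := by
  have hleft := intervalIntegrable_sin_rpow_zero_pi_div_two hq
  have hright : IntervalIntegrable (fun θ => sin θ ^ q) volume (π / 2) π := by
    simpa [sin_pi_sub, show π - π / 2 = π / 2 by ring] using (hleft.comp_sub_left π).symm
  exact hleft.trans hright

lemma sin_sq_le_two_mul_one_sub_cos (θ : ℝ) : sin θ ^ 2 ≤ 2 * (1 - cos θ) := by
  nlinarith [sin_sq θ, cos_le_one θ, neg_one_le_cos θ]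

lemma min_one_mul_rpow_le_sin_rpow {θ : ℝ} (hθ : 0 < θ) (hθπ : θ ≤ π / 2) (p : ℝ) :
    min 1 ((2 / π) ^ p) * θ ^ p ≤ sin θ ^ p := by
  have hsin : 2 / π * θ ≤ sin θ := mul_le_sin hθ.le hθπ
  have hθ0 : 0 < 2 / π * θ := mul_pos (by positivity) hθ
  rcases le_or_gt 0 p with hp | hp
  · calc min 1 ((2 / π) ^ p) * θ ^ p ≤ (2 / π) ^ p * θ ^ p :=
          mul_le_mul_of_nonneg_right (min_le_right _ _) (rpow_nonneg hθ.le p)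
      _ = (2 / π * θ) ^ p := (mul_rpow (by positivity) hθ.le).symm
      _ ≤ sin θ ^ p := rpow_le_rpow hθ0.le hsin hp
  · calc min 1 ((2 / π) ^ p) * θ ^ p ≤ 1 * θ ^ p :=
          mul_le_mul_of_nonneg_right (min_le_left _ _) (rpow_nonneg hθ.le p)
      _ ≤ sin θ ^ p := by
        rw [one_mul]
        exact rpow_le_rpow_of_nonpos (hθ0.trans_le hsin) (sin_le hθ.le) hp.le

lemma one_sub_cos_rpow_mul_sin_rpow_le {β lam θ : ℝ} (hθ : θ ∈ Ioo 0 π) (hβ : β ≤ lam) :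
    (1 - cos θ) ^ (β - lam) * sin θ ^ (2 * lam - 1) ≤ 2 ^ (lam - β) * sin θ ^ (2 * β - 1) := by
  have hs : 0 < sin θ := sin_pos_of_pos_of_lt_pi hθ.1 hθ.2
  have hu : (1 - cos θ) ^ (β - lam) ≤ (sin θ ^ 2 / 2) ^ (β - lam) :=
    rpow_le_rpow_of_nonpos (by positivity) (by linarith [sin_sq_le_two_mul_one_sub_cos θ])
      (by linarith)
  have hpow : (sin θ ^ 2 / 2) ^ (β - lam) * sin θ ^ (2 * lam - 1) =
      2 ^ (lam - β) * sin θ ^ (2 * β - 1) := by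
    rw [div_rpow (by positivity) zero_le_two, ← rpow_two, ← rpow_mul hs.le, div_mul_eq_mul_div,
      ← rpow_add hs, div_eq_mul_inv, ← rpow_neg zero_le_two]
    ring_nf
  exact hpow ▸ mul_le_mul_of_nonneg_right hu (rpow_nonneg hs.le _)

lemma integral_rpow_two_mul_sub_one_div_sqrt {lam a w : ℝ} (hlam : 0 < lam) (ha : 0 ≤ a)
    (hw : 0 ≤ w) :
    ∫ θ in 0..a / √w, θ ^ (2 * lam - 1) = a ^ (2 * lam) / (2 * lam * w ^ lam) := by
  rw [integral_rpow (.inl (by linarith)), sub_add_cancel, zero_rpow (by positivity), sub_zero,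
    div_rpow ha (sqrt_nonneg _), sqrt_eq_rpow, ← rpow_mul hw, div_div]
  ring_nf

lemma div_mul_rpow_eq_rpow_mul_rpow {x y a β lam : ℝ} (hx : 0 < x) (hy : 0 < y) (ha : 0 < a) :
    y / (a ^ (2 * β) * (x * y) ^ (lam + 1 - β)) =
      (y / x) ^ β * (a / x) ^ (1 - 2 * β) / ((x * y) ^ lam * a) := by
  rw [show lam + 1 - β = lam + (1 - β) by ring, rpow_add (by positivity),
    mul_rpow (z := 1 - β) hx.le hy.le, div_rpow hy.le hx.le, div_rpow ha.le hx.le,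
    rpow_sub hx, rpow_sub hy, rpow_sub ha, rpow_sub hx, rpow_one, rpow_one, rpow_one,
    mul_comm 2 β, rpow_mul hx.le, rpow_mul ha.le, rpow_two, rpow_two]
  have := rpow_pos_of_pos hx β
  have := rpow_pos_of_pos hy β
  have := rpow_pos_of_pos ha β
  have := rpow_pos_of_pos (mul_pos hx hy) lam
  field_simp

lemma exists_pos_forall_mul_one_add_rpow_mul_rpow_le {β : ℝ} (hβ : β < 1 / 2) (B : ℝ) {ε : ℝ}
    (hε : 0 < ε) : ∃ δ > 0, ∀ t, 0 < t → t < δ → B * ((1 + t) ^ β * t ^ (1 - 2 * β)) ≤ ε := by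
  have hcont : ContinuousAt (fun t : ℝ => B * ((1 + t) ^ β * t ^ (1 - 2 * β))) 0 :=
    continuousAt_const.mul (((continuousAt_const.add continuousAt_id).rpow_const
      (.inl (by norm_num))).mul (continuousAt_id.rpow_const (.inr (by linarith))))
  obtain ⟨δ, hδ, hball⟩ := Metric.continuousAt_iff.1 hcont ε hε
  refine ⟨δ, hδ, fun t ht htδ => ?_⟩
  have := hball (x := t) (by rwa [dist_zero_right, norm_of_nonneg ht.le])
  rw [zero_rpow (by linarith), mul_zero, mul_zero, dist_zero_right] at this
  exact (le_abs_self _).trans this.le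

noncomputable def rieszDenom (x y θ : ℝ) : ℝ := x ^ 2 + y ^ 2 - 2 * x * y * cos θ

section rieszDenom

variable {x y : ℝ}

lemma rieszDenom_eq (θ : ℝ) : rieszDenom x y θ = (y - x) ^ 2 + 2 * (x * y) * (1 - cos θ) := by
  rw [rieszDenom]; ring

lemma sq_sub_le_rieszDenom (hxy : 0 ≤ x * y) (θ : ℝ) : (y - x) ^ 2 ≤ rieszDenom x y θ := by
  rw [rieszDenom_eq]
  have := cos_le_one θ
  have : 0 ≤ 2 * (x * y) * (1 - cos θ) := by positivity
  linarith

lemma rieszDenom_le (hxy : 0 ≤ x * y) (θ : ℝ) :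
    rieszDenom x y θ ≤ (y - x) ^ 2 + x * y * θ ^ 2 := by
  rw [rieszDenom_eq]
  nlinarith [one_sub_sq_div_two_le_cos (x := θ)]

lemma rieszDenom_pos (hxy : 0 ≤ x * y) (hne : x ≠ y) (θ : ℝ) : 0 < rieszDenom x y θ :=
  (pow_two_pos_of_ne_zero (sub_ne_zero.2 hne.symm)).trans_le (sq_sub_le_rieszDenom hxy θ)

lemma intervalIntegrable_mul_sin_rpow_div_rieszDenom_rpow (hxy : 0 ≤ x * y) (hne : x ≠ y)
    {g : ℝ → ℝ} (hg : Continuous g) {q : ℝ} (hq : -1 < q) (r : ℝ) :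
    IntervalIntegrable (fun θ => g θ * sin θ ^ q / rieszDenom x y θ ^ r) volume 0 π := by
  have hD : Continuous fun θ => rieszDenom x y θ ^ r :=
    (by unfold rieszDenom; fun_prop : Continuous (rieszDenom x y)).rpow_const
      fun θ => .inl (rieszDenom_pos hxy hne θ).ne'
  refine ((intervalIntegrable_sin_rpow hq).continuousOn_mul
    (hg.div hD fun θ => (rpow_pos_of_pos (rieszDenom_pos hxy hne θ) r).ne').continuousOn).congr
    fun θ _ => ?_
  simp only [Pi.div_apply]
  ring

lemma rieszKernel_eq {lam : ℝ} (hlam : 0 < lam) (hxy : 0 ≤ x * y) (hne : x ≠ y) :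
    rieszKernel lam x y = 2 * lam / π *
      ((y - x) * (∫ θ in 0..π, sin θ ^ (2 * lam - 1) / rieszDenom x y θ ^ (lam + 1))
        - y * ∫ θ in 0..π, (1 - cos θ) * sin θ ^ (2 * lam - 1) / rieszDenom x y θ ^ (lam + 1)) := by
  have hp : -1 < 2 * lam - 1 := by linarith
  have h1 := intervalIntegrable_mul_sin_rpow_div_rieszDenom_rpow hxy hne continuous_const hp
    (lam + 1) (g := fun _ => 1)
  have h2 := intervalIntegrable_mul_sin_rpow_div_rieszDenom_rpow hxy hne
    (continuous_const.sub continuous_cos) hp (lam + 1) (g := fun θ => 1 - cos θ)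
  simp only [one_mul] at h1
  rw [← intervalIntegral.integral_const_mul, ← intervalIntegral.integral_const_mul,
    ← intervalIntegral.integral_sub (h1.const_mul _) (h2.const_mul _), rieszKernel,
    ← intervalIntegral.integral_const_mul, ← intervalIntegral.integral_const_mul]
  congr 1 with θ
  rw [rieszDenom]
  ring

lemma sin_rpow_div_rieszDenom_rpow_ge {lam : ℝ} (hlam : 0 < lam) (hx : 0 < x) (hxy : x < y)
    {θ : ℝ} (hθ : 0 < θ) (hθT : θ ≤ (y - x) / √(x * y)) (hθπ : θ ≤ π / 2) :
    min 1 ((2 / π) ^ (2 * lam - 1)) / (2 * (y - x) ^ 2) ^ (lam + 1) * θ ^ (2 * lam - 1) ≤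
      sin θ ^ (2 * lam - 1) / rieszDenom x y θ ^ (lam + 1) := by
  have hw : 0 < x * y := mul_pos hx (hx.trans hxy)
  have hD : rieszDenom x y θ ≤ 2 * (y - x) ^ 2 := by
    have hθ2 := pow_le_pow_left₀ hθ.le hθT 2
    rw [div_pow, sq_sqrt hw.le, le_div_iff₀ hw] at hθ2
    linarith [rieszDenom_le hw.le θ]
  rw [div_mul_eq_mul_div]
  exact div_le_div₀ (rpow_nonneg (sin_nonneg_of_nonneg_of_le_pi hθ.le (by linarith [pi_pos])) _)
    (min_one_mul_rpow_le_sin_rpow hθ hθπ _)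
    (rpow_pos_of_pos (rieszDenom_pos hw.le hxy.ne θ) _)
    (rpow_le_rpow (rieszDenom_pos hw.le hxy.ne θ).le hD (by linarith))

lemma integral_sin_rpow_div_rieszDenom_rpow_ge {lam : ℝ} (hlam : 0 < lam) (hx : 0 < x)
    (hxy : x < y) (hyx : y - x ≤ x) :
    min 1 ((2 / π) ^ (2 * lam - 1)) / (2 * (y - x) ^ 2) ^ (lam + 1) *
        ((y - x) ^ (2 * lam) / (2 * lam * (x * y) ^ lam)) ≤
      ∫ θ in 0..π, sin θ ^ (2 * lam - 1) / rieszDenom x y θ ^ (lam + 1) := by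
  have hw : 0 < x * y := mul_pos hx (hx.trans hxy)
  set T := (y - x) / √(x * y)
  have hT0 : 0 < T := div_pos (sub_pos.2 hxy) (sqrt_pos.2 hw)
  have hTπ : T ≤ π / 2 := by
    have : T ≤ 1 := by
      rw [div_le_one (sqrt_pos.2 hw)]
      exact hyx.trans (le_sqrt_of_sq_le (by nlinarith))
    linarith [pi_gt_three]
  have hT_mem : T ∈ uIcc 0 π := by rw [uIcc_of_le pi_pos.le]; exact ⟨hT0.le, by linarith⟩
  have hp : -1 < 2 * lam - 1 := by linarith
  have hf := intervalIntegrable_mul_sin_rpow_div_rieszDenom_rpow hw.le hxy.ne continuous_const hp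
    (lam + 1) (g := fun _ => 1)
  simp only [one_mul] at hf
  have hnonneg : ∀ θ ∈ Ioc 0 π, 0 ≤ sin θ ^ (2 * lam - 1) / rieszDenom x y θ ^ (lam + 1) :=
    fun θ hθ => div_nonneg (rpow_nonneg (sin_nonneg_of_nonneg_of_le_pi hθ.1.le hθ.2) _)
      (rpow_nonneg (rieszDenom_pos hw.le hxy.ne θ).le _)
  rw [← integral_rpow_two_mul_sub_one_div_sqrt hlam (sub_pos.2 hxy).le hw.le,
    ← intervalIntegral.integral_const_mul]
  calc _ ≤ ∫ θ in 0..T, sin θ ^ (2 * lam - 1) / rieszDenom x y θ ^ (lam + 1) :=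
        intervalIntegral.integral_mono_on_of_le_Ioo hT0.le
          ((intervalIntegral.intervalIntegrable_rpow' hp).const_mul _)
          (hf.mono_set (uIcc_subset_uIcc_left hT_mem))
          fun θ hθ => sin_rpow_div_rieszDenom_rpow_ge hlam hx hxy hθ.1 hθ.2.le (hθ.2.le.trans hTπ)
    _ ≤ _ := intervalIntegral.integral_mono_interval le_rfl hT0.le (by linarith [pi_pos])
        ((ae_restrict_iff' measurableSet_Ioc).2 (.of_forall hnonneg)) hf

lemma sub_mul_integral_sin_rpow_div_rieszDenom_rpow_ge {lam : ℝ} (hlam : 0 < lam) (hx : 0 < x)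
    (hxy : x < y) (hyx : y - x ≤ x) :
    min 1 ((2 / π) ^ (2 * lam - 1)) / (2 * lam * 2 ^ (lam + 1)) / ((x * y) ^ lam * (y - x)) ≤
      (y - x) * ∫ θ in 0..π, sin θ ^ (2 * lam - 1) / rieszDenom x y θ ^ (lam + 1) := by
  have ha : 0 < y - x := sub_pos.2 hxy
  have hw : 0 < x * y := mul_pos hx (hx.trans hxy)
  have hden : (2 * (y - x) ^ 2) ^ (lam + 1) =
      2 ^ (lam + 1) * ((y - x) ^ (2 * lam) * (y - x) ^ 2) := by
    rw [mul_rpow zero_le_two (sq_nonneg _), ← rpow_natCast, ← rpow_mul ha.le, ← rpow_add ha]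
    push_cast
    ring_nf
  have : 0 < (y - x) ^ (2 * lam) := by positivity
  calc _ = (y - x) * (min 1 ((2 / π) ^ (2 * lam - 1)) / (2 * (y - x) ^ 2) ^ (lam + 1) *
        ((y - x) ^ (2 * lam) / (2 * lam * (x * y) ^ lam))) := by
        rw [hden]
        field_simp
    _ ≤ _ := by gcongr; exact integral_sin_rpow_div_rieszDenom_rpow_ge hlam hx hxy hyx

lemma one_sub_cos_mul_sin_rpow_div_rieszDenom_rpow_le {β lam θ : ℝ} (hβ : 0 ≤ β)
    (hβlam : β ≤ lam) (hx : 0 < x) (hxy : x < y) (hθ : θ ∈ Ioo 0 π) :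
    (1 - cos θ) * sin θ ^ (2 * lam - 1) / rieszDenom x y θ ^ (lam + 1) ≤
      sin θ ^ (2 * β - 1) / (2 * (y - x) ^ (2 * β) * (x * y) ^ (lam + 1 - β)) := by
  have hw : 0 < x * y := mul_pos hx (hx.trans hxy)
  have ha : 0 < y - x := sub_pos.2 hxy
  have hs : 0 < sin θ := sin_pos_of_pos_of_lt_pi hθ.1 hθ.2
  have hu : 0 < 1 - cos θ := by nlinarith [sin_sq_le_two_mul_one_sub_cos θ]
  have hD : 0 < rieszDenom x y θ := rieszDenom_pos hw.le hxy.ne θ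
  have hsplit : (y - x) ^ (2 * β) * (2 * (x * y) * (1 - cos θ)) ^ (lam + 1 - β) ≤
      rieszDenom x y θ ^ (lam + 1) := by
    have hD_pow : rieszDenom x y θ ^ (lam + 1) =
        rieszDenom x y θ ^ β * rieszDenom x y θ ^ (lam + 1 - β) := by
      rw [← rpow_add hD]; ring_nf
    rw [hD_pow, rpow_mul ha.le, rpow_two]
    gcongr
    · exact sq_sub_le_rieszDenom hw.le θ
    · linarith
    · rw [rieszDenom_eq]; linarith [sq_nonneg (y - x)]
  have hcancel : (1 - cos θ) / (1 - cos θ) ^ (lam + 1 - β) = (1 - cos θ) ^ (β - lam) := by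
    rw [show β - lam = 1 - (lam + 1 - β) by ring, rpow_sub hu 1, rpow_one]
  calc (1 - cos θ) * sin θ ^ (2 * lam - 1) / rieszDenom x y θ ^ (lam + 1)
      ≤ (1 - cos θ) * sin θ ^ (2 * lam - 1) /
          ((y - x) ^ (2 * β) * (2 * (x * y) * (1 - cos θ)) ^ (lam + 1 - β)) := by
        gcongr
    _ = (1 - cos θ) ^ (β - lam) * sin θ ^ (2 * lam - 1) /
          ((y - x) ^ (2 * β) * (2 * (x * y)) ^ (lam + 1 - β)) := by
        rw [mul_rpow (by positivity) hu.le, ← hcancel]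
        field_simp
    _ ≤ 2 ^ (lam - β) * sin θ ^ (2 * β - 1) /
          ((y - x) ^ (2 * β) * (2 * (x * y)) ^ (lam + 1 - β)) :=
        div_le_div_of_nonneg_right (one_sub_cos_rpow_mul_sin_rpow_le hθ hβlam) (by positivity)
    _ = sin θ ^ (2 * β - 1) / (2 * (y - x) ^ (2 * β) * (x * y) ^ (lam + 1 - β)) := by
        rw [mul_rpow zero_le_two hw.le, show lam + 1 - β = lam - β + 1 by ring,
          rpow_add_one two_ne_zero]
        have := rpow_pos_of_pos two_pos (lam - β)
        field_simp

lemma mul_integral_one_sub_cos_mul_sin_rpow_div_rieszDenom_rpow_le {β lam : ℝ} (hβ : 0 < β)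
    (hβlam : β ≤ lam) (hx : 0 < x) (hxy : x < y) :
    y * ∫ θ in 0..π, (1 - cos θ) * sin θ ^ (2 * lam - 1) / rieszDenom x y θ ^ (lam + 1) ≤
      (∫ θ in 0..π, sin θ ^ (2 * β - 1)) / 2 * ((y / x) ^ β * ((y - x) / x) ^ (1 - 2 * β)) /
        ((x * y) ^ lam * (y - x)) := by
  have hy : 0 < y := hx.trans hxy
  have ha : 0 < y - x := sub_pos.2 hxy
  have hf := intervalIntegrable_mul_sin_rpow_div_rieszDenom_rpow (mul_pos hx hy).le hxy.ne
    (continuous_const.sub continuous_cos) (by linarith : -1 < 2 * lam - 1) (lam + 1)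
    (g := fun θ => 1 - cos θ)
  have hint := intervalIntegral.integral_mono_on_of_le_Ioo pi_pos.le hf
    ((intervalIntegrable_sin_rpow (by linarith : -1 < 2 * β - 1)).div_const
      (2 * (y - x) ^ (2 * β) * (x * y) ^ (lam + 1 - β)))
    fun θ hθ => one_sub_cos_mul_sin_rpow_div_rieszDenom_rpow_le hβ.le hβlam hx hxy hθ
  rw [intervalIntegral.integral_div] at hint
  calc _ ≤ y * ((∫ θ in 0..π, sin θ ^ (2 * β - 1)) /
        (2 * (y - x) ^ (2 * β) * (x * y) ^ (lam + 1 - β))) := by gcongr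
    _ = _ := by
      rw [mul_div_assoc, ← div_mul_rpow_eq_rpow_mul_rpow hx hy ha]
      ring

end rieszDenom

/-- Lower bound near the diagonal: there exist `K̃₃ ∈ (0,1/2)` and `C > 0` such that for
`0 < y/x - 1 < K̃₃`, `R_{Δ_λ}(x,y) ≥ C (1/(x^λ y^λ)) (1/(y-x))`. -/
theorem riesz_kernel_lower_bound_diagonal (lam : ℝ) (hlam : 0 < lam) :
    ∃ K C : ℝ, 0 < K ∧ K < 1/2 ∧ 0 < C ∧
      ∀ x y : ℝ, 0 < x → 0 < y → 0 < y/x - 1 → y/x - 1 < K →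
        C * (1 / (x ^ lam * y ^ lam)) * (1 / (y - x)) ≤ rieszKernel lam x y := by
  set β := min lam (1 / 4)
  have hβ : 0 < β := lt_min hlam (by norm_num)
  set c := min 1 ((2 / π) ^ (2 * lam - 1)) / (2 * lam * 2 ^ (lam + 1))
  have hc : 0 < c := div_pos (lt_min one_pos (by positivity)) (by positivity)
  obtain ⟨δ, hδ, hsmall⟩ := exists_pos_forall_mul_one_add_rpow_mul_rpow_le
    (by linarith [min_le_right lam (1 / 4)] : β < 1 / 2) ((∫ θ in 0..π, sin θ ^ (2 * β - 1)) / 2)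
    (half_pos hc)
  refine ⟨min δ (1 / 4), lam * c / π, lt_min hδ (by norm_num),
    (min_le_right _ _).trans_lt (by norm_num), by positivity, fun x y hx hy ht htK => ?_⟩
  have hxy : x < y := (one_lt_div hx).1 (by linarith)
  have hw : 0 < x * y := mul_pos hx hy
  have ht_eq : (y - x) / x = y / x - 1 := by field_simp
  have hyx : y - x ≤ x := by
    have : (y - x) / x ≤ 1 := by linarith [min_le_right δ (1 / 4)]
    rwa [div_le_one hx] at this
  have hI₁ := sub_mul_integral_sin_rpow_div_rieszDenom_rpow_ge hlam hx hxy hyx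
  have hI₂ : y * ∫ θ in 0..π, (1 - cos θ) * sin θ ^ (2 * lam - 1) / rieszDenom x y θ ^ (lam + 1) ≤
      c / 2 / ((x * y) ^ lam * (y - x)) := by
    refine (mul_integral_one_sub_cos_mul_sin_rpow_div_rieszDenom_rpow_le hβ (min_le_left _ _) hx
      hxy).trans (div_le_div_of_nonneg_right ?_ (by positivity))
    have := hsmall ((y - x) / x) (by linarith) (by linarith [min_le_left δ (1 / 4)])
    simpa only [ht_eq, add_sub_cancel] using this
  rw [rieszKernel_eq hlam hw.le hxy.ne, ← mul_rpow hx.le hy.le]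
  calc lam * c / π * (1 / (x * y) ^ lam) * (1 / (y - x))
      = 2 * lam / π * (c / ((x * y) ^ lam * (y - x)) - c / 2 / ((x * y) ^ lam * (y - x))) := by
        field_simp
        ring
    _ ≤ _ := by gcongr
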